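/- arXiv:1601.07624 — 2 statements merged into one kernel-verified Lean document; each statement's English description precedes it below -/
import Mathlib

section
/- (Non-randomness of the main lobe in delay) For every realization of the jitters ε_1, …, ε_{M−1} in [−ρ/2, ρ/2] and every delay τ with 0 ≤ τ ≤ T_p, the zero-Doppler cut of the ambiguity function of the random-PRI pulse train equals that of the stable-PRI pulse train: |Λ_yy(τ, 0)| = |Λ_xx(τ, 0)|; in particular both equal M (T_p − τ). -/
/-! At zero Doppler the ambiguity function is the autocorrelation `∫ u(t) u*(t - τ) dt`, which for
a sum of rectangular pulses is the total length of the overlaps of pulse `m` with delayed pulse `n`.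
Because the PRI exceeds the jitter range by `2 T_p`, any two jittered pulses start at least `2 T_p`
apart, so for `0 ≤ τ ≤ T_p` only the `M` diagonal pairs overlap, each over length `T_p - τ`,
whatever the jitters are. -/

open MeasureTheory ProbabilityTheory Real Finset

/-- Rectangular pulse of width `Tp`: equals `1` on `(0, Tp]` and `0` elsewhere. -/
noncomputable def pulse (Tp t : ℝ) : ℂ :=
  if 0 < t ∧ t ≤ Tp then 1 else 0

/-- Pulse train of `M` pulses with nominal PRI `Tr`, pulse width `Tp`, and jitters `ε`. -/
noncomputable def train (M : ℕ) (Tr Tp : ℝ) (ε : ℕ → ℝ) (t : ℝ) : ℂ :=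
  ∑ m ∈ Finset.range M, pulse Tp (t - m * Tr - ε m)

/-- Ambiguity function `Λ_uu(τ, f) = ∫ u(t) u*(t-τ) e^{-j2πft} dt`. -/
noncomputable def AF (u : ℝ → ℂ) (τ f : ℝ) : ℂ :=
  ∫ t : ℝ, u t * (starRingEnd ℂ) (u (t - τ)) * Complex.exp (-(2 * Real.pi * f * t) * Complex.I)

/-- `sinc x = sin x / x`, with `sinc 0 = 1`. -/
noncomputable def sinc (x : ℝ) : ℝ := if x = 0 then 1 else Real.sin x / x

open Set

lemma pulse_sub_eq_indicator (Tp a t : ℝ) :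
    pulse Tp (t - a) = (Ioc a (a + Tp)).indicator 1 t := by
  simp only [pulse, indicator, Set.mem_Ioc, sub_pos, sub_le_iff_le_add', Pi.one_apply]

lemma train_eq_sum_indicator (M : ℕ) (Tr Tp : ℝ) (ε : ℕ → ℝ) :
    train M Tr Tp ε =
      fun t => ∑ m ∈ range M, (Ioc (m * Tr + ε m) (m * Tr + ε m + Tp)).indicator 1 t := by
  funext t
  simp only [train, sub_sub, pulse_sub_eq_indicator]

lemma AF_zero_doppler (u : ℝ → ℂ) (τ : ℝ) :
    AF u τ 0 = ∫ t, u t * starRingEnd ℂ (u (t - τ)) := by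
  unfold AF
  simp only [Complex.ofReal_zero, mul_zero, zero_mul, neg_zero, Complex.exp_zero, mul_one]

lemma conj_indicator_one {α : Type*} (s : Set α) (t : α) :
    starRingEnd ℂ (s.indicator 1 t) = s.indicator 1 t := by
  by_cases ht : t ∈ s <;> simp [ht]

lemma AF_sum_indicator_zero_doppler {ι : Type*} (s : Finset ι) (I : ι → Set ℝ)
    (hI : ∀ i, MeasurableSet (I i)) (hIfin : ∀ i, volume (I i) ≠ ⊤) (τ : ℝ) :
    AF (fun t => ∑ i ∈ s, (I i).indicator 1 t) τ 0 =
      ∑ i ∈ s, ∑ j ∈ s, (volume.real (I i ∩ (· - τ) ⁻¹' I j) : ℂ) := by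
  have hmeas : ∀ i j, MeasurableSet (I i ∩ (· - τ) ⁻¹' I j) := fun i j =>
    (hI i).inter (measurable_id.sub_const τ (hI j))
  have hint : ∀ i j, Integrable ((I i ∩ (· - τ) ⁻¹' I j).indicator (1 : ℝ → ℂ)) := fun i j =>
    (integrableOn_const (measure_inter_lt_top_of_left_ne_top (hIfin i)).ne).integrable_indicator
      (hmeas i j)
  have hprod : ∀ i j t, (I i).indicator (1 : ℝ → ℂ) t * (I j).indicator 1 (t - τ) =
      (I i ∩ (· - τ) ⁻¹' I j).indicator 1 t := fun i j t => by
    rw [inter_indicator_one]; rfl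
  simp only [AF_zero_doppler, map_sum, conj_indicator_one, Finset.sum_mul_sum, hprod]
  rw [integral_finsetSum _ fun i _ => integrable_finsetSum _ fun j _ => hint i j]
  refine Finset.sum_congr rfl fun i _ => ?_
  rw [integral_finsetSum _ fun j _ => hint i j]
  refine Finset.sum_congr rfl fun j _ => ?_
  rw [← mul_one (volume.real _ : ℂ), ← Complex.real_smul, ← integral_indicator_const _ (hmeas i j)]
  rfl

lemma volume_real_Ioc_inter_preimage_sub_self (a Tp τ : ℝ) (hτ0 : 0 ≤ τ) (hτ : τ ≤ Tp) :
    volume.real (Ioc a (a + Tp) ∩ (· - τ) ⁻¹' Ioc a (a + Tp)) = Tp - τ := by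
  rw [preimage_sub_const_Ioc, Set.Ioc_inter_Ioc, Real.volume_real_Ioc,
    min_eq_left (by linarith : a + Tp ≤ a + Tp + τ), max_eq_right (by linarith : a ≤ a + τ),
    max_eq_left (by linarith)]
  ring

lemma volume_real_Ioc_inter_preimage_sub_of_separated (a b Tp τ : ℝ) (hτ0 : 0 ≤ τ)
    (hτ : τ ≤ Tp) (hab : a + 2 * Tp ≤ b ∨ b + 2 * Tp ≤ a) :
    volume.real (Ioc a (a + Tp) ∩ (· - τ) ⁻¹' Ioc b (b + Tp)) = 0 := by
  rw [preimage_sub_const_Ioc, Set.Ioc_inter_Ioc, Real.volume_real_Ioc, max_eq_right_iff, sub_nonpos]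
  rcases hab with hab | hab
  · exact (min_le_left _ _).trans (by linarith [le_max_right a (b + τ)])
  · exact (min_le_right _ _).trans (by linarith [le_max_left a (b + τ)])

lemma AF_sum_pulse_indicator_zero_doppler (M : ℕ) (Tp τ : ℝ) (a : ℕ → ℝ) (hτ0 : 0 ≤ τ)
    (hτ : τ ≤ Tp) (hsep : ∀ m n, m < n → n < M → a m + 2 * Tp ≤ a n) :
    AF (fun t => ∑ m ∈ range M, (Ioc (a m) (a m + Tp)).indicator 1 t) τ 0 = M * (Tp - τ) := by
  rw [AF_sum_indicator_zero_doppler _ _ (fun _ => measurableSet_Ioc)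
    (fun _ => measure_Ioc_lt_top.ne)]
  have hrow : ∀ m ∈ range M, ∑ n ∈ range M,
      (volume.real (Ioc (a m) (a m + Tp) ∩ (· - τ) ⁻¹' Ioc (a n) (a n + Tp)) : ℂ) = Tp - τ := by
    intro m hm
    rw [Finset.sum_eq_single m, volume_real_Ioc_inter_preimage_sub_self _ _ _ hτ0 hτ]
    · push_cast; rfl
    · intro n hn hnm
      rw [Finset.mem_range] at hm hn
      rw [volume_real_Ioc_inter_preimage_sub_of_separated _ _ _ _ hτ0 hτ, Complex.ofReal_zero]
      rcases lt_or_gt_of_ne hnm with h | h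
      · exact .inr (hsep n m h hm)
      · exact .inl (hsep m n h hn)
    · exact fun h => absurd hm h
  rw [Finset.sum_congr rfl hrow, Finset.sum_const, card_range, nsmul_eq_mul]

lemma AF_train_zero_doppler (M : ℕ) (Tr Tp : ℝ) (ε : ℕ → ℝ) (τ : ℝ) (hτ0 : 0 ≤ τ)
    (hτ : τ ≤ Tp) (hsep : ∀ m n, m < n → n < M → m * Tr + ε m + 2 * Tp ≤ n * Tr + ε n) :
    AF (train M Tr Tp ε) τ 0 = M * (Tp - τ) := by
  rw [train_eq_sum_indicator]
  exact AF_sum_pulse_indicator_zero_doppler M Tp τ _ hτ0 hτ hsep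

lemma jittered_pulses_separated {M : ℕ} {Tr Tp ρ : ℝ} {ε : ℕ → ℝ} (hTp : 0 ≤ Tp) (hρ : 0 ≤ ρ)
    (hρTr : ρ ≤ Tr - 2 * Tp) (hε : ∀ m < M, ε m ∈ Icc (-(ρ / 2)) (ρ / 2)) :
    ∀ m n, m < n → n < M → m * Tr + ε m + 2 * Tp ≤ n * Tr + ε n := by
  intro m n hmn hn
  have hPRI : (m + 1 : ℝ) * Tr ≤ n * Tr :=
    mul_le_mul_of_nonneg_right (by exact_mod_cast hmn) (by linarith)
  linarith [(hε m (hmn.trans hn)).2, (hε n hn).1]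

theorem af_mainlobe_nonrandom_general
    (M : ℕ) (Tr Tp ρ : ℝ) (hρ : 0 < ρ)
    (hρTr : ρ ≤ Tr - 2 * Tp)
    (ε : ℕ → ℝ)
    (hεbd : ∀ m, m ≤ M - 1 → ε m ∈ Set.Icc (-(ρ / 2)) (ρ / 2))
    (τ : ℝ) (hτ0 : 0 ≤ τ) (hτ : τ ≤ Tp) :
    ‖AF (train M Tr Tp ε) τ 0‖ = ‖AF (train M Tr Tp (fun _ => 0)) τ 0‖ ∧
    ‖AF (train M Tr Tp ε) τ 0‖ = M * (Tp - τ) := by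
  have hTp : 0 ≤ Tp := hτ0.trans hτ
  have hjitter : ∀ m < M, ε m ∈ Icc (-(ρ / 2)) (ρ / 2) := fun m hm => hεbd m (by omega)
  have hstable : ∀ m < M, (fun _ => (0 : ℝ)) m ∈ Icc (-(ρ / 2)) (ρ / 2) :=
    fun _ _ => ⟨by linarith, by linarith⟩
  rw [AF_train_zero_doppler M Tr Tp ε τ hτ0 hτ (jittered_pulses_separated hTp hρ.le hρTr hjitter),
    AF_train_zero_doppler M Tr Tp _ τ hτ0 hτ (jittered_pulses_separated hTp hρ.le hρTr hstable)]
  refine ⟨rfl, ?_⟩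
  rw [← Complex.ofReal_natCast, ← Complex.ofReal_sub, ← Complex.ofReal_mul, Complex.norm_real,
    Real.norm_of_nonneg (by positivity)]

/-- **Non-randomness of the main lobe in delay.** For every realization of the
jitters and every `0 ≤ τ ≤ Tp`, `|Λ_yy(τ,0)| = |Λ_xx(τ,0)|`, and both equal `M (Tp - τ)`. -/
theorem af_mainlobe_nonrandom
    (M : ℕ) (hM : 1 ≤ M) (Tr Tp ρ : ℝ) (hTp : 0 < Tp) (hρ : 0 < ρ)
    (hρTr : ρ ≤ Tr - 2 * Tp)
    (ε : ℕ → ℝ) (hε0 : ε 0 = 0)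
    (hεbd : ∀ m, m ≤ M - 1 → ε m ∈ Set.Icc (-(ρ / 2)) (ρ / 2))
    (τ : ℝ) (hτ0 : 0 ≤ τ) (hτ : τ ≤ Tp) :
    ‖AF (train M Tr Tp ε) τ 0‖ = ‖AF (train M Tr Tp (fun _ => 0)) τ 0‖ ∧
    ‖AF (train M Tr Tp ε) τ 0‖ = M * (Tp - τ) :=
  af_mainlobe_nonrandom_general M Tr Tp ρ hρ hρTr ε hεbd τ hτ0 hτ
end

section
/- For every real f, the standard deviation of the normalized zero-delay cut of the random-PRI ambiguity function is strictly less than 1/√M: std[|Λ_yy(0, f)| / |Λ_yy(0, 0)|] < 1/√M, where |Λ_yy(0,0)| = M T_p and std denotes the square root of the variance. -/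
/-!
On the full-measure event where every jitter lies in `(-ρ/2, ρ/2)`, the pulses of the train are
pairwise disjoint, so `|y|² = ∑ₘ s(· - m T_r - εₘ)` and, by the shift rule for the Fourier
transform, `Λ_yy(0, f) = ŝ(f) ∑ₘ e^{-2πi f (m T_r + εₘ)}` with `|ŝ(f)| ≤ T_p`.
The variance of the modulus of a complex random variable is at most the sum of the variances of
its real and imaginary parts, and for a sum of independent unit phasors these add up over the
summands, each contributing at most `1` and the deterministic phasor `m = 0` nothing. The
normalized cut therefore has variance at most `(M - 1) / M² < 1 / M`.
-/

open MeasureTheory ProbabilityTheory Real Finset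

open scoped FourierTransform ComplexConjugate

lemma pulse_mul_pulse_of_le_abs_sub {Tp a b : ℝ} (h : Tp ≤ |a - b|) (t : ℝ) :
    pulse Tp (t - a) * pulse Tp (t - b) = 0 := by
  unfold pulse
  by_cases ha : 0 < t - a ∧ t - a ≤ Tp
  · by_cases hb : 0 < t - b ∧ t - b ≤ Tp
    · rcases le_abs'.mp h with h | h <;> linarith [ha.1, ha.2, hb.1, hb.2]
    · rw [if_neg hb, mul_zero]
  · rw [if_neg ha, zero_mul]

lemma pulse_mul_self (Tp t : ℝ) : pulse Tp t * pulse Tp t = pulse Tp t := by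
  unfold pulse; split_ifs <;> simp

lemma conj_pulse (Tp t : ℝ) : conj (pulse Tp t) = pulse Tp t := by
  unfold pulse; split_ifs <;> simp

lemma integrable_pulse (Tp : ℝ) : Integrable (pulse Tp) := by
  have : pulse Tp = (Set.Ioc 0 Tp).indicator 1 := by
    ext t; simp [pulse, Set.indicator, Set.mem_Ioc]
  rw [this, integrable_indicator_iff measurableSet_Ioc]
  exact integrableOn_const (by simp)

lemma integral_norm_pulse {Tp : ℝ} (hTp : 0 ≤ Tp) : ∫ t, ‖pulse Tp t‖ = Tp := by
  have : (fun t => ‖pulse Tp t‖) = (Set.Ioc 0 Tp).indicator 1 := by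
    ext t; simp only [pulse, Set.indicator, Set.mem_Ioc]; split_ifs <;> simp
  rw [this, integral_indicator_one measurableSet_Ioc]
  simp [hTp]

lemma sum_pulse_mul_conj {s : Finset ℕ} {Tp : ℝ} {a : ℕ → ℝ}
    (hsep : (s : Set ℕ).Pairwise fun m k => Tp ≤ |a m - a k|) (t : ℝ) :
    (∑ m ∈ s, pulse Tp (t - a m)) * conj (∑ m ∈ s, pulse Tp (t - a m)) =
      ∑ m ∈ s, pulse Tp (t - a m) := by
  simp only [map_sum, conj_pulse, Finset.sum_mul_sum]
  refine Finset.sum_congr rfl fun m hm => ?_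
  rw [Finset.sum_eq_single_of_mem m hm fun k hk hkm =>
    pulse_mul_pulse_of_le_abs_sub (hsep hm hk hkm.symm) t, pulse_mul_self]

lemma pairwise_le_abs_sub_of_abs_le {s : Finset ℕ} {Tr Tp ρ : ℝ} {e : ℕ → ℝ}
    (hTr : Tp + ρ ≤ Tr) (hTp : 0 ≤ Tp) (he : ∀ m ∈ s, |e m| ≤ ρ / 2) :
    (s : Set ℕ).Pairwise fun m k => Tp ≤ |(m * Tr + e m) - (k * Tr + e k)| := by
  intro m hm k hk hmk
  have hρ : 0 ≤ ρ := by linarith [(abs_nonneg _).trans (he m hm)]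
  obtain ⟨hm₁, hm₂⟩ := abs_le.mp (he m hm)
  obtain ⟨hk₁, hk₂⟩ := abs_le.mp (he k hk)
  rcases lt_or_gt_of_ne hmk with h | h
  · have : (m : ℝ) + 1 ≤ k := by exact_mod_cast h
    exact le_abs.mpr (Or.inr (by nlinarith))
  · have : (k : ℝ) + 1 ≤ m := by exact_mod_cast h
    exact le_abs.mpr (Or.inl (by nlinarith))

lemma AF_zero_eq_fourierIntegral (u : ℝ → ℂ) (f : ℝ) :
    AF u 0 f = Fourier.fourierIntegral 𝐞 volume (fun t => u t * conj (u t)) f := by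
  simp only [AF, Fourier.fourierIntegral_def, sub_zero]
  congr 1 with t
  rw [mul_comm]; congr 2; push_cast; ring

lemma fourierIntegral_sum_pulse (s : Finset ℕ) (Tp : ℝ) (a : ℕ → ℝ) (f : ℝ) :
    Fourier.fourierIntegral 𝐞 volume (fun t => ∑ m ∈ s, pulse Tp (t - a m)) f =
      (∑ m ∈ s, (𝐞 (-(a m * f)) : ℂ)) * Fourier.fourierIntegral 𝐞 volume (pulse Tp) f := by
  have hshift (m : ℕ) : Fourier.fourierIntegral 𝐞 volume (fun t => pulse Tp (t - a m)) f =
      𝐞 (-(a m * f)) * Fourier.fourierIntegral 𝐞 volume (pulse Tp) f := by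
    simpa [sub_eq_add_neg, Function.comp_def, Circle.smul_def] using
      congrFun (Fourier.fourierIntegral_comp_add_right 𝐞 volume (pulse Tp) (-a m)) f
  rw [Finset.sum_mul, ← Finset.sum_congr rfl fun m _ => hshift m]
  simp only [Fourier.fourierIntegral_def, Finset.smul_sum]
  refine integral_finsetSum s fun m _ => ?_
  exact (VectorFourier.fourierIntegral_convergent_iff (L := LinearMap.mul ℝ ℝ)
    Real.continuous_fourierChar (by fun_prop) f).2 ((integrable_pulse Tp).comp_sub_right (a m))

lemma AF_train_zero_eq {M : ℕ} {Tr Tp : ℝ} {e : ℕ → ℝ}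
    (hsep : (Finset.range M : Set ℕ).Pairwise fun m k =>
      Tp ≤ |(m * Tr + e m) - (k * Tr + e k)|) (f : ℝ) :
    AF (train M Tr Tp e) 0 f = (∑ m ∈ Finset.range M, (𝐞 (-((m * Tr + e m) * f)) : ℂ)) *
      Fourier.fourierIntegral 𝐞 volume (pulse Tp) f := by
  have htrain :
      train M Tr Tp e = fun t => ∑ m ∈ Finset.range M, pulse Tp (t - (m * Tr + e m)) := by
    ext t; simp only [train, sub_sub]
  rw [AF_zero_eq_fourierIntegral, htrain]
  simp only [sum_pulse_mul_conj hsep]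
  exact fourierIntegral_sum_pulse _ Tp _ f

lemma ae_mem_of_map_eq_smul_restrict {Ω α : Type*} [MeasurableSpace Ω] [MeasurableSpace α]
    {μ : Measure Ω} {ν : Measure α} {X : Ω → α} {c : ENNReal} {s : Set α}
    (hX : AEMeasurable X μ) (hs : MeasurableSet s) (h : μ.map X = c • ν.restrict s) :
    ∀ᵐ ω ∂μ, X ω ∈ s :=
  ae_of_ae_map hX (h ▸ Measure.ae_smul_measure (ae_restrict_mem hs) c)

lemma ae_forall_abs_le_of_map_eq_uniform {Ω : Type*} [MeasurableSpace Ω] {μ : Measure Ω}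
    {M : ℕ} {ρ : ℝ} (hρ : 0 < ρ) {ε : ℕ → Ω → ℝ} (hε0 : ∀ ω, ε 0 ω = 0)
    (hmeas : ∀ m, Measurable (ε m))
    (hdist : ∀ m, 1 ≤ m → m ≤ M - 1 →
      Measure.map (ε m) μ = (ENNReal.ofReal ρ)⁻¹ • volume.restrict (Set.Ioo (-(ρ / 2)) (ρ / 2))) :
    ∀ᵐ ω ∂μ, ∀ m ∈ Finset.range M, |ε m ω| ≤ ρ / 2 := by
  rw [Filter.eventually_all_finset]
  intro m hm
  rcases Nat.eq_zero_or_pos m with rfl | hm₁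
  · exact ae_of_all _ fun ω => by rw [hε0, abs_zero]; positivity
  · filter_upwards [ae_mem_of_map_eq_smul_restrict (hmeas m).aemeasurable measurableSet_Ioo
      (hdist m hm₁ (Nat.le_sub_one_of_lt (Finset.mem_range.mp hm)))] with ω hω
    exact abs_le.mpr ⟨hω.1.le, hω.2.le⟩

section ComplexVariance

variable {Ω : Type*} [MeasurableSpace Ω] {μ : Measure Ω}

lemma integral_sq_norm_eq {Z : Ω → ℂ} (hZ : MemLp Z 2 μ) :
    ∫ ω, ‖Z ω‖ ^ 2 ∂μ = ∫ ω, (Z ω).re ^ 2 ∂μ + ∫ ω, (Z ω).im ^ 2 ∂μ := by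
  have hre : MemLp (fun ω => (Z ω).re) 2 μ := hZ.re
  have him : MemLp (fun ω => (Z ω).im) 2 μ := hZ.im
  rw [← integral_add hre.integrable_sq him.integrable_sq]
  congr 1 with ω
  rw [Complex.sq_norm, Complex.normSq_apply]
  ring

lemma variance_norm_le_variance_re_add_variance_im [IsProbabilityMeasure μ] {Z : Ω → ℂ}
    (hZ : MemLp Z 2 μ) :
    Var[fun ω => ‖Z ω‖; μ] ≤ Var[fun ω => (Z ω).re; μ] + Var[fun ω => (Z ω).im; μ] := by
  have hre : MemLp (fun ω => (Z ω).re) 2 μ := hZ.re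
  have him : MemLp (fun ω => (Z ω).im) 2 μ := hZ.im
  have hZ₁ : Integrable Z μ := hZ.integrable one_le_two
  have hmean : (∫ ω, (Z ω).re ∂μ) ^ 2 + (∫ ω, (Z ω).im ∂μ) ^ 2 ≤ (∫ ω, ‖Z ω‖ ∂μ) ^ 2 :=
    calc (∫ ω, (Z ω).re ∂μ) ^ 2 + (∫ ω, (Z ω).im ∂μ) ^ 2 = ‖∫ ω, Z ω ∂μ‖ ^ 2 := by
          have hre₁ : ∫ ω, (Z ω).re ∂μ = (∫ ω, Z ω ∂μ).re := integral_re hZ₁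
          have him₁ : ∫ ω, (Z ω).im ∂μ = (∫ ω, Z ω ∂μ).im := integral_im hZ₁
          rw [hre₁, him₁, Complex.sq_norm, Complex.normSq_apply]
          ring
      _ ≤ _ := pow_le_pow_left₀ (norm_nonneg _) (norm_integral_le_integral_norm Z) 2
  rw [variance_eq_sub hZ.norm, variance_eq_sub hre, variance_eq_sub him]
  simp only [Pi.pow_apply, integral_sq_norm_eq hZ]
  linarith

lemma variance_re_add_variance_im_le_one [IsProbabilityMeasure μ] {W : Ω → ℂ}
    (hW : AEStronglyMeasurable W μ) (h : ∀ᵐ ω ∂μ, ‖W ω‖ ≤ 1) :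
    Var[fun ω => (W ω).re; μ] + Var[fun ω => (W ω).im; μ] ≤ 1 := by
  have hW₂ : MemLp W 2 μ := MemLp.of_bound hW 1 h
  have hle : ∫ ω, ‖W ω‖ ^ 2 ∂μ ≤ 1 := by
    refine (integral_mono_ae (hW₂.integrable_norm_pow two_ne_zero) (integrable_const 1)
      (h.mono fun ω hω => ?_)).trans_eq (by simp)
    exact pow_le_one₀ (norm_nonneg _) hω
  have hre : MemLp (fun ω => (W ω).re) 2 μ := hW₂.re
  have him : MemLp (fun ω => (W ω).im) 2 μ := hW₂.im
  have hre₂ := variance_le_expectation_sq hre.1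
  have him₂ := variance_le_expectation_sq him.1
  simp only [Pi.pow_apply] at hre₂ him₂
  linarith [integral_sq_norm_eq hW₂]

lemma variance_map_sum_of_iIndepFun {ι E : Type*} [Fintype ι] [NormedAddCommGroup E]
    [NormedSpace ℝ E] [MeasurableSpace E] [BorelSpace E] (L : E →L[ℝ] ℝ)
    {W : ι → Ω → E} (hW : ∀ i, MemLp (W i) 2 μ) (hind : iIndepFun W μ) :
    Var[fun ω => L (∑ i, W i ω); μ] = ∑ i, Var[fun ω => L (W i ω); μ] := by
  have hsum : (fun ω => L (∑ i, W i ω)) = ∑ i, fun ω => L (W i ω) := by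
    ext ω; simp
  rw [hsum]
  exact IndepFun.variance_sum (fun i _ => L.comp_memLp' (hW i)) fun i _ j _ hij =>
    (hind.indepFun hij).comp L.measurable L.measurable

lemma variance_norm_sum_le_card_sub_one [IsProbabilityMeasure μ] {ι : Type*} [Fintype ι]
    {W : ι → Ω → ℂ} (hW : ∀ i, Measurable (W i)) (hbound : ∀ i ω, ‖W i ω‖ ≤ 1)
    (hind : iIndepFun W μ) (i₀ : ι) (c : ℂ) (hconst : ∀ ω, W i₀ ω = c) :
    Var[fun ω => ‖∑ i, W i ω‖; μ] ≤ Fintype.card ι - 1 := by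
  classical
  have hW₂ (i : ι) : MemLp (W i) 2 μ :=
    MemLp.of_bound (hW i).aestronglyMeasurable 1 (ae_of_all _ (hbound i))
  set v : ι → ℝ := fun i => Var[fun ω => (W i ω).re; μ] + Var[fun ω => (W i ω).im; μ]
  have hv_le (i : ι) : v i ≤ 1 :=
    variance_re_add_variance_im_le_one (hW i).aestronglyMeasurable (ae_of_all _ (hbound i))
  have hv₀ : v i₀ = 0 := by simp [v, hconst, variance, evariance]
  calc Var[fun ω => ‖∑ i, W i ω‖; μ]
      ≤ Var[fun ω => (∑ i, W i ω).re; μ] + Var[fun ω => (∑ i, W i ω).im; μ] :=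
        variance_norm_le_variance_re_add_variance_im (memLp_finsetSum _ fun i _ => hW₂ i)
    _ = ∑ i, v i := by
        have hre := variance_map_sum_of_iIndepFun Complex.reCLM hW₂ hind
        have him := variance_map_sum_of_iIndepFun Complex.imCLM hW₂ hind
        simp only [Complex.reCLM_apply, Complex.imCLM_apply] at hre him
        rw [Finset.sum_add_distrib, hre, him]
    _ = ∑ i ∈ Finset.univ.erase i₀, v i := by
        rw [← Finset.add_sum_erase _ _ (Finset.mem_univ i₀), hv₀, zero_add]
    _ ≤ ∑ i ∈ Finset.univ.erase i₀, 1 := Finset.sum_le_sum fun i _ => hv_le i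
    _ = Fintype.card ι - 1 := by
        rw [Finset.sum_erase_eq_sub (Finset.mem_univ i₀)]
        simp

end ComplexVariance

/-- For every `f`, the standard deviation of the normalized zero-delay cut
is strictly less than `1/√M`. -/
theorem doppler_cut_std_lt
    {Ω : Type*} [MeasurableSpace Ω] (μ : Measure Ω) [IsProbabilityMeasure μ]
    (M : ℕ) (hM : 1 ≤ M) (Tr Tp ρ : ℝ) (hTp : 0 < Tp) (hρ : 0 < ρ)
    (hρTr : ρ ≤ Tr - 2 * Tp)
    (ε : ℕ → Ω → ℝ) (hε0 : ∀ ω, ε 0 ω = 0)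
    (hmeas : ∀ m, Measurable (ε m))
    (hdist : ∀ m, 1 ≤ m → m ≤ M - 1 →
      Measure.map (ε m) μ = (ENNReal.ofReal ρ)⁻¹ • volume.restrict (Set.Ioo (-(ρ / 2)) (ρ / 2)))
    (hindep : iIndepFun (fun m : Fin M => ε (m : ℕ)) μ)
    (f : ℝ) :
    Real.sqrt (variance (fun ω => ‖AF (train M Tr Tp (fun k => ε k ω)) 0 f‖ / ((M : ℝ) * Tp)) μ)
      < 1 / Real.sqrt M := by
  set c := ‖Fourier.fourierIntegral 𝐞 volume (pulse Tp) f‖ / (M * Tp)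
  set g : Fin M → ℝ → ℂ := fun m x => 𝐞 (-((m * Tr + x) * f))
  have hg (m : Fin M) : Measurable (g m) := by fun_prop
  have hAF : (fun ω => ‖AF (train M Tr Tp (fun k => ε k ω)) 0 f‖ / (M * Tp)) =ᵐ[μ]
      fun ω => c * ‖∑ m, g m (ε m ω)‖ := by
    filter_upwards [ae_forall_abs_le_of_map_eq_uniform hρ hε0 hmeas hdist] with ω hω
    rw [AF_train_zero_eq (pairwise_le_abs_sub_of_abs_le (by linarith) hTp.le hω), norm_mul,
      Fin.sum_univ_eq_sum_range (fun m => (𝐞 (-((m * Tr + ε m ω) * f)) : ℂ))]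
    ring
  have hvar : Var[fun ω => ‖∑ m, g m (ε m ω)‖; μ] ≤ M - 1 := by
    simpa using variance_norm_sum_le_card_sub_one (fun m => (hg m).comp (hmeas m))
      (fun m ω => (Circle.norm_coe _).le) (hindep.comp g hg) ⟨0, hM⟩ 1 (by simp [g, hε0])
  have hc : c ≤ 1 / M := by
    have hP := (Fourier.norm_fourierIntegral_le_integral_norm 𝐞 volume (pulse Tp) f).trans_eq
      (integral_norm_pulse hTp.le)
    rw [div_le_div_iff₀ (by positivity) (by positivity)]
    nlinarith
  have hM₁ : (1 : ℝ) ≤ M := by exact_mod_cast hM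
  rw [variance_congr hAF, variance_const_mul]
  calc √(c ^ 2 * Var[fun ω => ‖∑ m, g m (ε m ω)‖; μ])
      ≤ √((1 / M) ^ 2 * (M - 1)) :=
        Real.sqrt_le_sqrt (mul_le_mul (pow_le_pow_left₀ (by positivity) hc 2) hvar
          (variance_nonneg _ _) (by positivity))
    _ < √(1 / M) := Real.sqrt_lt_sqrt (by nlinarith) (by field_simp; linarith)
    _ = 1 / √M := by rw [Real.sqrt_div zero_le_one, Real.sqrt_one]
end
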